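/- arXiv:1801.06078 — 2 statements merged into one kernel-verified Lean document; each statement's English description precedes it below -/
import Mathlib

section
/- Let c = c₊c₋ be a bipartite standard Coxeter element of a finite Coxeter system (W,S), where S = S₊ ⊎ S₋ with each part consisting of pairwise commuting simple reflections and c± the product of the elements of S±. Then the map L(w) = c₊ w c₋ is an involutive anti-automorphism of the poset (NC(W,c), ≤). -/
/-!
`c₊` and `c₋` are involutions, and the absolute length `ℓ_T` is invariant under conjugation
and inversion, hence `ℓ_T (x * y) = ℓ_T (y * x)`. With `L w = c₊ w c₋` this gives
`ℓ_T (L w) = ℓ_T (w⁻¹ c)`, `ℓ_T ((L w)⁻¹ c) = ℓ_T w` and `ℓ_T ((L w)⁻¹ L v) = ℓ_T (v⁻¹ w)`,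
which exchange the two defining equations of `v ≤ w` (inside `[e, c]`) with those of
`L w ≤ L v`.
-/

namespace NCpaper

open CoxeterSystem

variable {B : Type*} {W : Type*} [Group W] {M : CoxeterMatrix B}

/-- The absolute length: minimal length of a factorization into reflections. -/
noncomputable def absLength (cs : CoxeterSystem M W) (w : W) : ℕ :=
  sInf {k | ∃ l : List W, (∀ t ∈ l, cs.IsReflection t) ∧ l.length = k ∧ l.prod = w}

/-- The absolute order: `v ≤ w` iff `ℓ_T w = ℓ_T (v⁻¹ w) + ℓ_T v`. -/
noncomputable def AbsLe (cs : CoxeterSystem M W) (v w : W) : Prop :=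
  absLength cs w = absLength cs (v⁻¹ * w) + absLength cs v

/-- Cover relation of the absolute order. -/
noncomputable def AbsCovBy (cs : CoxeterSystem M W) (v w : W) : Prop :=
  cs.IsReflection (v⁻¹ * w) ∧ absLength cs w = absLength cs v + 1

/-- Generating relation of the Bruhat order: multiply by a reflection, length goes up. -/
def BruhatGen (cs : CoxeterSystem M W) (v w : W) : Prop :=
  cs.IsReflection (v⁻¹ * w) ∧ cs.length v < cs.length w

/-- The Bruhat order. -/
def BruhatLe (cs : CoxeterSystem M W) : W → W → Prop := Relation.ReflTransGen (BruhatGen cs)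

/-- The strict Bruhat order. -/
def BruhatLt (cs : CoxeterSystem M W) : W → W → Prop := Relation.TransGen (BruhatGen cs)

/-- The support of an element: simple reflections occurring in every (equivalently, some)
reduced word for it. -/
def supp (cs : CoxeterSystem M W) (w : W) : Set B :=
  {i | ∀ l : List B, cs.IsReduced l → cs.wordProd l = w → i ∈ l}

/-- A standard Coxeter element: the product of all the simple reflections, each once,
in some order. -/
def IsStdCoxeterElement (cs : CoxeterSystem M W) (c : W) : Prop :=
  ∃ l : List B, l.Nodup ∧ (∀ i : B, i ∈ l) ∧ cs.wordProd l = c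

/-- Generating relation for the order `⊏`: an absolute-order cover which is Bruhat-increasing. -/
noncomputable def SqGen (cs : CoxeterSystem M W) (v w : W) : Prop :=
  AbsCovBy cs v w ∧ BruhatLt cs v w

/-- The order `⊏`. -/
noncomputable def Sq (cs : CoxeterSystem M W) : W → W → Prop :=
  Relation.ReflTransGen (SqGen cs)

/-- Generating relation for the order `≪`: an absolute-order cover which is Bruhat-decreasing. -/
noncomputable def LlGen (cs : CoxeterSystem M W) (v w : W) : Prop :=
  AbsCovBy cs v w ∧ BruhatLt cs w v

/-- The order `≪`. -/
noncomputable def Ll (cs : CoxeterSystem M W) : W → W → Prop :=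
  Relation.ReflTransGen (LlGen cs)

section AbsLength

variable (cs : CoxeterSystem M W)

theorem absLength_conj (x w : W) : absLength cs (x * w * x⁻¹) = absLength cs w := by
  suffices h : ∀ (x w : W) (k : ℕ),
      (∃ l : List W, (∀ t ∈ l, cs.IsReflection t) ∧ l.length = k ∧ l.prod = w) →
      ∃ l : List W, (∀ t ∈ l, cs.IsReflection t) ∧ l.length = k ∧ l.prod = x * w * x⁻¹ by
    unfold absLength
    congr 1
    ext k
    exact ⟨fun hk => by simpa [mul_assoc] using h x⁻¹ _ k hk, h x w k⟩
  rintro x w k ⟨l, hrefl, rfl, rfl⟩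
  refine ⟨l.map (MulAut.conj x), ?_, List.length_map _, ?_⟩
  · simp only [List.mem_map]
    rintro _ ⟨t, ht, rfl⟩
    simpa using (hrefl t ht).conj x
  · rw [← map_list_prod, MulAut.conj_apply]

theorem absLength_inv (w : W) : absLength cs w⁻¹ = absLength cs w := by
  suffices h : ∀ (w : W) (k : ℕ),
      (∃ l : List W, (∀ t ∈ l, cs.IsReflection t) ∧ l.length = k ∧ l.prod = w) →
      ∃ l : List W, (∀ t ∈ l, cs.IsReflection t) ∧ l.length = k ∧ l.prod = w⁻¹ by
    unfold absLength
    congr 1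
    ext k
    exact ⟨fun hk => by simpa using h w⁻¹ k hk, h w k⟩
  rintro w k ⟨l, hrefl, rfl, rfl⟩
  refine ⟨(l.map Inv.inv).reverse, ?_, by simp, (List.prod_inv_reverse l).symm⟩
  simp only [List.mem_reverse, List.mem_map]
  rintro _ ⟨t, ht, rfl⟩
  exact (hrefl t ht).isReflection_inv

theorem absLength_mul_comm (x y : W) : absLength cs (x * y) = absLength cs (y * x) := by
  rw [← absLength_conj cs x (y * x)]
  group

theorem absLength_inv_mul_comm (v w : W) : absLength cs (v⁻¹ * w) = absLength cs (w⁻¹ * v) := by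
  rw [← absLength_inv, mul_inv_rev, inv_inv]

end AbsLength

theorem wordProd_mul_self_of_pairwise_commute (cs : CoxeterSystem M W) (l : List B)
    (h : ∀ i ∈ l, ∀ j ∈ l, cs.simple i * cs.simple j = cs.simple j * cs.simple i) :
    cs.wordProd l * cs.wordProd l = 1 := by
  induction l with
  | nil => simp
  | cons a t ih =>
    have hcomm : Commute (cs.wordProd t) (cs.simple a) := by
      refine (Commute.list_prod_left _ _ fun y hy => ?_)
      obtain ⟨j, hj, rfl⟩ := List.mem_map.mp hy
      exact h j (List.mem_cons_of_mem a hj) a List.mem_cons_self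
    rw [wordProd_cons, hcomm.mul_mul_mul_comm, cs.simple_mul_simple_self, one_mul,
      ih fun i hi j hj => h i (List.mem_cons_of_mem a hi) j (List.mem_cons_of_mem a hj)]

section Bipartite

variable (cs : CoxeterSystem M W) {a b : W}

theorem absLength_mul_mul_of_involutive (ha : a * a = 1) (hb : b * b = 1) (w : W) :
    absLength cs (a * w * b) = absLength cs (w⁻¹ * (a * b)) := by
  have hba : b * a = (a * b)⁻¹ := by
    rw [mul_inv_rev, inv_eq_of_mul_eq_one_right ha, inv_eq_of_mul_eq_one_right hb]
  rw [mul_assoc, absLength_mul_comm, mul_assoc, hba, ← absLength_inv, mul_inv_rev, inv_inv,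
    absLength_mul_comm]

theorem absLength_inv_mul_mul_mul (v w : W) :
    absLength cs ((a * w * b)⁻¹ * (a * v * b)) = absLength cs (w⁻¹ * v) := by
  rw [← absLength_conj cs b]
  group

theorem absLength_inv_mul_mul (w : W) :
    absLength cs ((a * w * b)⁻¹ * (a * b)) = absLength cs w := by
  rw [← absLength_conj cs b, ← absLength_inv]
  group

theorem absLe_mul_mul_of_involutive (ha : a * a = 1) (hb : b * b = 1) {w : W}
    (hw : AbsLe cs w (a * b)) : AbsLe cs (a * w * b) (a * b) := by
  unfold AbsLe at hw ⊢
  rw [absLength_mul_mul_of_involutive cs ha hb, absLength_inv_mul_mul]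
  omega

theorem absLe_iff_mul_mul_of_involutive (ha : a * a = 1) (hb : b * b = 1) {v w : W}
    (hv : AbsLe cs v (a * b)) (hw : AbsLe cs w (a * b)) :
    AbsLe cs v w ↔ AbsLe cs (a * w * b) (a * v * b) := by
  unfold AbsLe at hv hw ⊢
  rw [absLength_mul_mul_of_involutive cs ha hb, absLength_mul_mul_of_involutive cs ha hb,
    absLength_inv_mul_mul_mul, absLength_inv_mul_comm cs w]
  omega

end Bipartite

theorem stmt10_general (cs : CoxeterSystem M W) (lp lm : List B)
    (hcp : ∀ i ∈ lp, ∀ j ∈ lp, cs.simple i * cs.simple j = cs.simple j * cs.simple i)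
    (hcm : ∀ i ∈ lm, ∀ j ∈ lm, cs.simple i * cs.simple j = cs.simple j * cs.simple i)
    (cp cm c : W) (hcpd : cp = cs.wordProd lp) (hcmd : cm = cs.wordProd lm)
    (hcdef : c = cp * cm) :
    (∀ w : W, AbsLe cs w c → AbsLe cs (cp * w * cm) c) ∧
    (∀ w : W, cp * (cp * w * cm) * cm = w) ∧
    (∀ v w : W, AbsLe cs v c → AbsLe cs w c →
      (AbsLe cs v w ↔ AbsLe cs (cp * w * cm) (cp * v * cm))) := by
  have hcp2 : cp * cp = 1 := hcpd ▸ wordProd_mul_self_of_pairwise_commute cs lp hcp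
  have hcm2 : cm * cm = 1 := hcmd ▸ wordProd_mul_self_of_pairwise_commute cs lm hcm
  subst hcdef
  refine ⟨fun w => absLe_mul_mul_of_involutive cs hcp2 hcm2, fun w => ?_,
    fun v w => absLe_iff_mul_mul_of_involutive cs hcp2 hcm2⟩
  rw [← mul_assoc, ← mul_assoc, hcp2, one_mul, mul_assoc, hcm2, mul_one]

/-- Proposition 3.5: for a bipartite standard Coxeter element `c = c₊c₋`, the map
`L(w) = c₊ w c₋` is an involutive anti-automorphism of `(NC(W,c), ≤)`. -/
theorem stmt10 [Finite W] (cs : CoxeterSystem M W) (lp lm : List B)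
    (hnp : lp.Nodup) (hnm : lm.Nodup)
    (hcover : ∀ i : B, i ∈ lp ∨ i ∈ lm) (hdisj : ∀ i : B, ¬ (i ∈ lp ∧ i ∈ lm))
    (hcp : ∀ i ∈ lp, ∀ j ∈ lp, cs.simple i * cs.simple j = cs.simple j * cs.simple i)
    (hcm : ∀ i ∈ lm, ∀ j ∈ lm, cs.simple i * cs.simple j = cs.simple j * cs.simple i)
    (cp cm c : W) (hcpd : cp = cs.wordProd lp) (hcmd : cm = cs.wordProd lm)
    (hcdef : c = cp * cm) :
    (∀ w : W, AbsLe cs w c → AbsLe cs (cp * w * cm) c) ∧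
    (∀ w : W, cp * (cp * w * cm) * cm = w) ∧
    (∀ v w : W, AbsLe cs v c → AbsLe cs w c →
      (AbsLe cs v w ↔ AbsLe cs (cp * w * cm) (cp * v * cm))) :=
  stmt10_general cs lp lm hcp hcm cp cm c hcpd hcmd hcdef

end NCpaper
end

section
/- In the symmetric group S₅ with simple transpositions, let v = (2 4) and w = (1 5)(2 3 4) (cycle notation). Then v ≤ w in absolute order and v ≤_B w in Bruhat order, but v ⊏ w does not hold, where ⊏ is the transitive closure of the relation: for absolute-order covers u ⋖ u′, u ⊏· u′ iff u <_B u′. -/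
namespace S5

open Equiv

/-- A transposition in `S₅`, i.e. a reflection. -/
def IsTransposition (t : Perm (Fin 5)) : Prop := ∃ a b : Fin 5, a ≠ b ∧ t = swap a b

/-- Absolute length: minimal number of transpositions. -/
noncomputable def absLength (w : Perm (Fin 5)) : ℕ :=
  sInf {k | ∃ l : List (Perm (Fin 5)),
    (∀ t ∈ l, IsTransposition t) ∧ l.length = k ∧ l.prod = w}

/-- The absolute order on `S₅`. -/
noncomputable def AbsLe (v w : Perm (Fin 5)) : Prop :=
  absLength w = absLength (v⁻¹ * w) + absLength v

/-- Cover relation of the absolute order. -/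
noncomputable def AbsCovBy (v w : Perm (Fin 5)) : Prop :=
  IsTransposition (v⁻¹ * w) ∧ absLength w = absLength v + 1

/-- The Coxeter length of a permutation: its number of inversions. -/
def len (w : Perm (Fin 5)) : ℕ :=
  (Finset.univ.filter (fun p : Fin 5 × Fin 5 => p.1 < p.2 ∧ w p.2 < w p.1)).card

/-- Generating relation of the Bruhat order. -/
def BruhatGen (v w : Perm (Fin 5)) : Prop :=
  IsTransposition (v⁻¹ * w) ∧ len v < len w

/-- The Bruhat order on `S₅`. -/
def BruhatLe : Perm (Fin 5) → Perm (Fin 5) → Prop := Relation.ReflTransGen BruhatGen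

/-- The strict Bruhat order on `S₅`. -/
def BruhatLt : Perm (Fin 5) → Perm (Fin 5) → Prop := Relation.TransGen BruhatGen

/-- Generating relation of the order `⊏`: Bruhat-increasing absolute covers. -/
noncomputable def SqGen (v w : Perm (Fin 5)) : Prop := AbsCovBy v w ∧ BruhatLt v w

/-- The order `⊏` on `S₅`. -/
noncomputable def Sq : Perm (Fin 5) → Perm (Fin 5) → Prop := Relation.ReflTransGen SqGen

/-! Every ⊏-step raises the absolute length by exactly one, and `ℓ_T(v) = 1`, `ℓ_T(w) = 3`,
so `v ⊏ w` would need a middle element `m = v t` with `m⁻¹ w` a reflection. Only `t = (0 4)`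
and `t = (1 2)` qualify, and they give Coxeter lengths `10 > ℓ(w) = 9` and `2 < ℓ(v) = 3`, so
neither two-step chain is Bruhat-increasing. The absolute lengths themselves are pinned down by
the bound `|supp σ| ≤ 2 ℓ_T(σ)`, as a transposition moves only two points. -/

open Finset

lemma _root_.Equiv.Perm.card_support_list_prod_le {α : Type*} [DecidableEq α] [Fintype α]
    {l : List (Perm α)} (hl : ∀ t ∈ l, t.IsSwap) : #l.prod.support ≤ 2 * l.length := by
  induction l with
  | nil => simp
  | cons t l ih =>
    obtain ⟨x, y, hxy, rfl⟩ := hl t List.mem_cons_self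
    calc #(swap x y * l.prod).support
        ≤ #((swap x y).support ∪ l.prod.support) := card_le_card (Perm.support_mul_le _ _)
      _ ≤ #(swap x y).support + #l.prod.support := card_union_le _ _
      _ ≤ 2 * (l.length + 1) := by
        rw [Perm.card_support_swap hxy]
        linarith [ih fun t ht => hl t (List.mem_cons_of_mem _ ht)]

lemma isTransposition_swap {a b : Fin 5} (h : a ≠ b) : IsTransposition (swap a b) :=
  ⟨a, b, h, rfl⟩

instance : DecidablePred IsTransposition := fun t =>
  inferInstanceAs (Decidable (∃ a b : Fin 5, a ≠ b ∧ t = swap a b))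

lemma absLength_le_length {w : Perm (Fin 5)} {l : List (Perm (Fin 5))}
    (hl : ∀ t ∈ l, IsTransposition t) (hw : l.prod = w) : absLength w ≤ l.length :=
  Nat.sInf_le ⟨l, hl, rfl, hw⟩

lemma card_support_le_two_mul_absLength (w : Perm (Fin 5)) :
    #w.support ≤ 2 * absLength w := by
  obtain ⟨l, hw, hl⟩ := w.truncSwapFactors.out
  obtain ⟨l', hl', hlen, rfl⟩ : absLength w ∈ {k | ∃ l' : List (Perm (Fin 5)),
      (∀ t ∈ l', IsTransposition t) ∧ l'.length = k ∧ l'.prod = w} :=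
    Nat.sInf_mem ⟨_, l, hl, rfl, hw⟩
  rw [← hlen]
  exact Perm.card_support_list_prod_le hl'

lemma absLength_eq_of_list {w : Perm (Fin 5)} {l : List (Perm (Fin 5))}
    (hl : ∀ t ∈ l, IsTransposition t) (hw : l.prod = w)
    (hsupp : 2 * l.length ≤ #w.support + 1) :
    absLength w = l.length := by
  have := card_support_le_two_mul_absLength w
  have := absLength_le_length hl hw
  omega

lemma bruhatGen_mul_swap {v : Perm (Fin 5)} {a b : Fin 5} (hab : a ≠ b)
    (hlen : len v < len (v * swap a b)) : BruhatGen v (v * swap a b) :=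
  ⟨⟨a, b, hab, by rw [inv_mul_cancel_left]⟩, hlen⟩

lemma BruhatLt.len_lt {u v : Perm (Fin 5)} (h : BruhatLt u v) : len u < len v := by
  induction h with
  | single h => exact h.2
  | tail _ h ih => exact ih.trans h.2

lemma Sq.absLength_le {u v : Perm (Fin 5)} (h : Sq u v) : absLength u ≤ absLength v := by
  induction h with
  | refl => rfl
  | tail _ h ih => rw [h.1.2]; omega

lemma Sq.eq_of_absLength_le {u v : Perm (Fin 5)} (h : Sq u v)
    (hle : absLength v ≤ absLength u) : u = v := by
  rcases h.cases_head with rfl | ⟨m, hum, hmv⟩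
  · rfl
  · have := Sq.absLength_le hmv
    rw [hum.1.2] at this
    omega

lemma Sq.exists_sqGen_sqGen {u v : Perm (Fin 5)} (h : Sq u v)
    (huv : absLength v = absLength u + 2) : ∃ m, SqGen u m ∧ SqGen m v := by
  rcases h.cases_head with rfl | ⟨m, hum, hmv⟩
  · omega
  rcases hmv.cases_head with rfl | ⟨m', hmm', hm'v⟩
  · rw [hum.1.2] at huv; omega
  obtain rfl := Sq.eq_of_absLength_le hm'v (by rw [hmm'.1.2, hum.1.2]; omega)
  exact ⟨m, hum, hmm'⟩

local notation "𝐯" => (swap 1 3 : Perm (Fin 5))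
local notation "𝐰" => (swap 0 4 * (swap 1 2 * swap 2 3) : Perm (Fin 5))

lemma absLength_v : absLength 𝐯 = 1 :=
  absLength_eq_of_list (l := [swap 1 3]) (by simp [isTransposition_swap]) (by simp) (by decide)

lemma absLength_w : absLength 𝐰 = 3 :=
  absLength_eq_of_list (l := [swap 0 4, swap 1 2, swap 2 3]) (by simp [isTransposition_swap])
    (by simp) (by decide)

lemma absLength_v_inv_mul_w : absLength (𝐯⁻¹ * 𝐰) = 2 :=
  absLength_eq_of_list (l := [swap 0 4, swap 1 2]) (by simp [isTransposition_swap]) (by decide)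
    (by decide)

lemma bruhatLe_v_w : BruhatLe 𝐯 𝐰 := by
  have hw : 𝐰 = 𝐯 * swap 0 1 * swap 0 4 * swap 1 2 * swap 2 4 := by decide
  rw [hw]
  exact .head (bruhatGen_mul_swap (by decide) (by decide)) <|
    .head (bruhatGen_mul_swap (by decide) (by decide)) <|
    .head (bruhatGen_mul_swap (by decide) (by decide)) <|
    .single (bruhatGen_mul_swap (by decide) (by decide))

lemma len_not_between_of_isTransposition : ∀ a b : Fin 5, a ≠ b →
    IsTransposition ((𝐯 * swap a b)⁻¹ * 𝐰) →
    len (𝐯 * swap a b) ≤ len 𝐯 ∨ len 𝐰 ≤ len (𝐯 * swap a b) := by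
  decide

/-- With `v = (2 4)` and `w = (1 5)(2 3 4)` (as permutations of `{0,…,4}`:
`v = (1 3)`, `w = (0 4)(1 2 3)`), we have `v ≤ w` in absolute order and
`v ≤_B w` in Bruhat order, but not `v ⊏ w`. -/
theorem stmt13 :
    AbsLe (swap 1 3) (swap 0 4 * (swap 1 2 * swap 2 3)) ∧
    BruhatLe (swap 1 3) (swap 0 4 * (swap 1 2 * swap 2 3)) ∧
    ¬ Sq (swap 1 3) (swap 0 4 * (swap 1 2 * swap 2 3)) := by
  refine ⟨?_, bruhatLe_v_w, fun hsq => ?_⟩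
  · rw [AbsLe, absLength_v, absLength_w, absLength_v_inv_mul_w]
  obtain ⟨m, hvm, hmw⟩ := hsq.exists_sqGen_sqGen (by rw [absLength_v, absLength_w])
  obtain ⟨a, b, hab, hvm_eq⟩ := hvm.1.1
  obtain rfl : m = 𝐯 * swap a b := by rw [← hvm_eq, mul_inv_cancel_left]
  have := hvm.2.len_lt
  have := hmw.2.len_lt
  rcases len_not_between_of_isTransposition a b hab hmw.1.1 with h | h <;> omega

end S5
end
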